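/- arXiv:2411.00015 — 2 statements merged into one kernel-verified Lean document; each statement's English description precedes it below -/
import Mathlib

section
/- For all integers m > n ≥ 2, the base-3 tetration satisfies T(m) ≡ T(n) (mod 10^(n-1)) and T(m) ≢ T(n) (mod 10^n). In particular, Graham's number G = T(n) (for the appropriate n = slog_3(G)) shares exactly its last n−1 decimal digits with every taller base-3 power tower. -/
def T : ℕ → ℕ
  | 0 => 1
  | b + 1 => 3 ^ T b

/-- auxiliary: successive difference of the tower -/
def D (n : ℕ) : ℕ := T (n + 1) - T n

lemma T_lt_succ (n : ℕ) : T n < T (n + 1) := by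
  show T n < 3 ^ T n
  exact Nat.lt_pow_self (by norm_num)

lemma T_strictMono : StrictMono T := strictMono_nat_of_lt_succ T_lt_succ

lemma T_le_of_le {m n : ℕ} (h : m ≤ n) : T m ≤ T n := T_strictMono.monotone h

lemma D_pos (n : ℕ) : 0 < D n := Nat.sub_pos_of_lt (T_lt_succ n)

lemma T_succ_eq (n : ℕ) : T (n + 1) = T n + D n :=
  (Nat.add_sub_cancel' (T_lt_succ n).le).symm

instance f2 : Fact (Nat.Prime 2) := ⟨by norm_num⟩
instance f5 : Fact (Nat.Prime 5) := ⟨by norm_num⟩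

lemma D_succ (n : ℕ) : D (n + 1) = 3 ^ T n * (3 ^ D n - 1) := by
  show 3 ^ T (n + 1) - 3 ^ T n = _
  rw [T_succ_eq n, pow_add, Nat.mul_sub, Nat.mul_one]

lemma v2_pow_sub_one {e : ℕ} (he : e ≠ 0) (h2 : 2 ∣ e) :
    padicValNat 2 (3 ^ e - 1) = padicValNat 2 e + 2 := by
  have h := padicValNat.pow_two_sub_pow (x := 3) (y := 1) (by norm_num) (by norm_num)
    (by norm_num) he (even_iff_two_dvd.mpr h2)
  simp only [one_pow] at h
  have e4 : padicValNat 2 (3 + 1) = 2 := by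
    show padicValNat 2 (2 ^ 2) = 2
    exact padicValNat.prime_pow 2
  have e2 : padicValNat 2 (3 - 1) = 1 := by
    show padicValNat 2 (2 ^ 1) = 1
    exact padicValNat.prime_pow 1
  rw [e4, e2] at h
  omega

lemma v5_pow_sub_one {e : ℕ} (he : e ≠ 0) (h4 : 4 ∣ e) :
    padicValNat 5 (3 ^ e - 1) = padicValNat 5 e + 1 := by
  obtain ⟨q, rfl⟩ := h4
  have hq : q ≠ 0 := by rintro rfl; simp at he
  have h := padicValNat.pow_sub_pow (p := 5) ⟨2, by norm_num⟩ (x := 81) (y := 1)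
    (by norm_num) (by norm_num) (by norm_num) (n := q) hq
  simp only [one_pow] at h
  have h81 : (81 : ℕ) ^ q = 3 ^ (4 * q) := by rw [pow_mul]; norm_num
  rw [h81] at h
  have hv80 : padicValNat 5 80 = 1 := by
    have : (80 : ℕ) = 5 ^ 1 * 16 := by norm_num
    rw [this, padicValNat.mul (by norm_num) (by norm_num), padicValNat.prime_pow,
      padicValNat.eq_zero_of_not_dvd (by norm_num)]
  have hv4 : padicValNat 5 (4 * q) = padicValNat 5 q := by
    rw [padicValNat.mul (by norm_num) hq, padicValNat.eq_zero_of_not_dvd (by norm_num)]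
    omega
  have h80 : padicValNat 5 (81 - 1) = 1 := hv80
  rw [h, hv4, h80]
  omega

lemma pow_sub_one_ne_zero {e : ℕ} (he : e ≠ 0) : 3 ^ e - 1 ≠ 0 := by
  have : 3 ^ 1 ≤ 3 ^ e := Nat.pow_le_pow_right (by norm_num) (Nat.one_le_iff_ne_zero.mpr he)
  omega

lemma D_val : ∀ n, 2 ≤ n →
    padicValNat 2 (D n) = 2 * n + 1 ∧ padicValNat 5 (D n) = n - 1 := by
  intro n hn
  induction n with
  | zero => omega
  | succ k ih =>
    rcases Nat.lt_or_ge k 2 with hk | hk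
    · -- base case: k + 1 = 2, so k = 1
      interval_cases k
      · omega
      · have hD : D 2 = 3 ^ 27 - 27 := rfl
        constructor
        · have : (3:ℕ) ^ 27 - 27 = 2 ^ 5 * 238299921405 := by norm_num
          rw [hD, this, padicValNat.mul (by norm_num) (by norm_num),
            padicValNat.prime_pow, padicValNat.eq_zero_of_not_dvd (by norm_num)]
        · have : (3:ℕ) ^ 27 - 27 = 5 ^ 1 * 1525119496992 := by norm_num
          rw [hD, this, padicValNat.mul (by norm_num) (by norm_num),
            padicValNat.prime_pow, padicValNat.eq_zero_of_not_dvd (by norm_num)]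
    · obtain ⟨h2, h5⟩ := ih hk
      have hDk : D k ≠ 0 := (D_pos k).ne'
      have h3k : ¬ (2:ℕ) ∣ 3 ^ T k := by
        intro h
        exact (by norm_num : ¬ (2:ℕ) ∣ 3) ((Nat.Prime.dvd_of_dvd_pow (by norm_num) h))
      have h3k5 : ¬ (5:ℕ) ∣ 3 ^ T k := by
        intro h
        exact (by norm_num : ¬ (5:ℕ) ∣ 3) ((Nat.Prime.dvd_of_dvd_pow (by norm_num) h))
      have h4dvd : 4 ∣ D k := by
        have : (2:ℕ) ^ 2 ∣ 2 ^ padicValNat 2 (D k) := pow_dvd_pow 2 (by omega)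
        exact (by norm_num : (4:ℕ) = 2 ^ 2) ▸ this.trans pow_padicValNat_dvd
      have h2dvd : 2 ∣ D k := dvd_trans (by norm_num) h4dvd
      have hne : 3 ^ D k - 1 ≠ 0 := pow_sub_one_ne_zero hDk
      rw [D_succ, padicValNat.mul (by positivity) hne,
        padicValNat.eq_zero_of_not_dvd h3k, v2_pow_sub_one hDk h2dvd,
        padicValNat.mul (by positivity) hne,
        padicValNat.eq_zero_of_not_dvd h3k5, v5_pow_sub_one hDk h4dvd]
      omega

lemma ten_pow_dvd_D {n : ℕ} (hn : 2 ≤ n) : 10 ^ (n - 1) ∣ D n := by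
  obtain ⟨h2, h5⟩ := D_val n hn
  have hd2 : (2:ℕ) ^ (n - 1) ∣ D n := by
    calc (2:ℕ) ^ (n-1) ∣ 2 ^ padicValNat 2 (D n) := pow_dvd_pow 2 (by omega)
      _ ∣ D n := pow_padicValNat_dvd
  have hd5 : (5:ℕ) ^ (n - 1) ∣ D n := by
    calc (5:ℕ) ^ (n-1) ∣ 5 ^ padicValNat 5 (D n) := pow_dvd_pow 5 (by omega)
      _ ∣ D n := pow_padicValNat_dvd
  have hcop : Nat.Coprime (2 ^ (n-1)) (5 ^ (n-1)) :=
    Nat.Coprime.pow _ _ (by norm_num)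
  have := hcop.mul_dvd_of_dvd_of_dvd hd2 hd5
  rwa [← mul_pow] at this

lemma five_pow_not_dvd_D {n : ℕ} (hn : 2 ≤ n) : ¬ 5 ^ n ∣ D n := by
  obtain ⟨-, h5⟩ := D_val n hn
  intro h
  have := (padicValNat_dvd_iff_le (D_pos n).ne').mp h
  omega

lemma T_modEq {m n : ℕ} (hn : 2 ≤ n) (hnm : n < m) :
    T m ≡ T n [MOD 10 ^ (n - 1)] := by
  induction m with
  | zero => omega
  | succ k ih =>
    have hstep : T (k + 1) ≡ T k [MOD 10 ^ (n - 1)] := by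
      rcases Nat.lt_or_ge k n with h | h
      ·
        have hkn : k = n ∨ k < n := by omega
        rcases hkn with rfl | h'
        · exact ((Nat.modEq_iff_dvd' (T_lt_succ k).le).mpr (ten_pow_dvd_D hn)).symm
        · omega
      · have : T (k + 1) ≡ T k [MOD 10 ^ (k - 1)] :=
          ((Nat.modEq_iff_dvd' (T_lt_succ k).le).mpr (ten_pow_dvd_D (by omega))).symm
        exact this.of_dvd (pow_dvd_pow 10 (by omega))
    rcases Nat.lt_or_ge n k with h | h
    · exact hstep.trans (ih h)
    · have : k = n := by omega
      subst this
      exact hstep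

theorem stmt5 : ∀ m n : ℕ, 2 ≤ n → n < m →
    T m ≡ T n [MOD 10 ^ (n - 1)] ∧ ¬ (T m ≡ T n [MOD 10 ^ n]) := by
  intro m n hn hnm
  refine ⟨T_modEq hn hnm, ?_⟩
  intro h
  have h1 : T m ≡ T (n + 1) [MOD 10 ^ n] := by
    rcases Nat.lt_or_ge (n + 1) m with hm | hm
    · have := T_modEq (m := m) (n := n + 1) (by omega) hm
      simpa using this
    · have : m = n + 1 := by omega
      subst this; rfl
  have h2 : T (n + 1) ≡ T n [MOD 10 ^ n] := h1.symm.trans h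
  have hdvd : 10 ^ n ∣ D n := (Nat.modEq_iff_dvd' (T_lt_succ n).le).mp h2.symm
  have h5 : (5:ℕ) ^ n ∣ D n := by
    have : (5:ℕ) ^ n ∣ 10 ^ n := pow_dvd_pow_of_dvd (by norm_num) n
    exact this.trans hdvd
  exact five_pow_not_dvd_D hn h5
end

section
/- For every integer b ≥ 3 and every c ≥ 1, T(b+c) ≡ T(b+c+4) in the sense of phase shifts: the b-th rightmost digit difference pattern between T(b) and T(b+1) depends only on b mod 2; concretely, for all b ≥ 2, (T(b+1) − T(b))/10^(b-1) mod 10 equals 4 if b is odd and 6 if b is even, so the asymptotic phase shift cycle of base 3 is [4,6]. -/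
lemma T_odd (b : ℕ) : Odd (T b) := by
  cases b with
  | zero => exact ⟨0, rfl⟩
  | succ b => exact (show Odd 3 by decide).pow

lemma T_mod4 (b : ℕ) : T (b + 1) % 4 = 3 := by
  obtain ⟨k, hk⟩ := T_odd b
  show 3 ^ T b % 4 = 3
  rw [hk, pow_add, pow_mul]
  norm_num [Nat.mul_mod, Nat.pow_mod]

lemma T_le (b : ℕ) : T b ≤ T (b + 1) :=
  (show T b < 3 ^ T b from Nat.lt_pow_self (by norm_num)).le

lemma two_pow_dvd (k : ℕ) : 2 ^ (k + 3) ∣ 3 ^ (2 ^ (k + 1)) - 1 := by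
  induction k with
  | zero => norm_num
  | succ k ih =>
    have h1 : (3 : ℕ) ^ (2 ^ (k + 2)) = (3 ^ (2 ^ (k + 1))) ^ 2 := by
      rw [← pow_mul, pow_succ]
    obtain ⟨j, hj⟩ : ∃ j, (3 : ℕ) ^ (2 ^ (k + 1)) = 2 * j + 1 := by
      obtain ⟨j, hj⟩ := (show Odd 3 by decide).pow (n := 2 ^ (k + 1))
      exact ⟨j, hj⟩
    have h2 : (3 : ℕ) ^ (2 ^ (k + 2)) - 1 = (2 * j) * (2 * j + 2) := by
      rw [h1, hj]; ring_nf; omega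
    rw [h2]
    have hd1 : 2 ^ (k + 3) ∣ 2 * j := by rw [show 2 * j = 3 ^ 2 ^ (k+1) - 1 by omega]; exact ih
    have hd2 : (2 : ℕ) ∣ 2 * j + 2 := ⟨j + 1, by ring⟩
    calc 2 ^ (k + 4) = 2 ^ (k + 3) * 2 := by rw [pow_succ]
    _ ∣ (2 * j) * (2 * j + 2) := mul_dvd_mul hd1 hd2

lemma five_pow (k : ℕ) : ∃ c, 3 ^ (4 * 5 ^ k) = 1 + 5 ^ (k + 1) + 5 ^ (k + 2) * c := by
  induction k with
  | zero => exact ⟨3, by norm_num⟩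
  | succ k ih =>
    obtain ⟨c, hc⟩ := ih
    set q : ℕ := 5 ^ k with hq
    have hc' : 3 ^ (4 * 5 ^ k) = 1 + 5 * q + 25 * q * c := by
      rw [hc]; rw [pow_succ, pow_succ, pow_succ]; ring
    refine ⟨c + 2*q + 20*q*c + 50*q*c^2 + 10*q^2 + 150*q^2*c + 750*q^2*c^2 + 1250*q^2*c^3
      + 25*q^3 + 500*q^3*c + 3750*q^3*c^2 + 12500*q^3*c^3 + 15625*q^3*c^4
      + 25*q^4 + 625*q^4*c + 6250*q^4*c^2 + 31250*q^4*c^3 + 78125*q^4*c^4 + 78125*q^4*c^5, ?_⟩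
    have h1 : (3 : ℕ) ^ (4 * 5 ^ (k + 1)) = (3 ^ (4 * 5 ^ k)) ^ 5 := by
      rw [← pow_mul, pow_succ]; ring_nf
    rw [h1, hc']
    rw [show (5:ℕ) ^ (k + 2) = 25 * q by rw [pow_succ, pow_succ]; ring,
        show (5:ℕ) ^ (k + 3) = 125 * q by rw [pow_succ, pow_succ, pow_succ]; ring]
    ring

lemma pow_one_add (q c : ℕ) (n : ℕ) :
    ∃ d, (1 + 5*q + 25*q*c) ^ n = 1 + 5*q*n + 25*q*d := by
  induction n with
  | zero => exact ⟨0, by norm_num⟩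
  | succ n ih =>
    obtain ⟨d, hd⟩ := ih
    refine ⟨c + q*n + 5*q*n*c + d*(1 + 5*q + 25*q*c), ?_⟩
    rw [pow_succ, hd]; ring

lemma pow3_mod5 {m : ℕ} (hm : m % 4 = 3) : 3 ^ m ≡ 2 [MOD 5] := by
  obtain ⟨t, ht⟩ : ∃ t, m = 4 * t + 3 := ⟨m / 4, by omega⟩
  subst ht
  show (3 ^ (4 * t + 3)) % 5 = 2 % 5
  rw [pow_add, pow_mul]
  norm_num [Nat.mul_mod, Nat.pow_mod]

lemma pow4_mod5 (j : ℕ) : 4 ^ j % 5 = if Even j then 1 else 4 := by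
  induction j with
  | zero => norm_num
  | succ j ih =>
    rw [pow_succ, Nat.mul_mod, ih]
    rcases Nat.even_or_odd j with h | h
    · rw [if_pos h, if_neg (by rw [Nat.even_add_one]; exact fun hc => hc h)]
    · rw [if_neg (Nat.not_even_iff_odd.mpr h),
        if_pos (Nat.even_add_one.mpr (Nat.not_even_iff_odd.mpr h))]

lemma main (m : ℕ) : ∃ n, T (m + 3) - T (m + 2) = 4 * 5 ^ (m + 1) * n ∧
    2 ^ (m + 3) ∣ (T (m + 3) - T (m + 2)) ∧ n % 5 = 3 ^ (m + 1) % 5 := by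
  induction m with
  | zero =>
    refine ⟨381279874248, ?_, ?_, by norm_num⟩
    · show 3 ^ T 2 - T 2 = _
      norm_num [show T 2 = 27 from rfl]
    · show (8 : ℕ) ∣ 3 ^ T 2 - T 2
      norm_num [show T 2 = 27 from rfl]
  | succ m ih =>
    obtain ⟨n, heq, h2, hn⟩ := ih
    -- abbreviations
    have hle : T (m + 2) ≤ T (m + 3) := T_le (m + 2)
    have hfact : T (m + 4) - T (m + 3) =
        3 ^ T (m + 2) * (3 ^ (T (m + 3) - T (m + 2)) - 1) := by
      have h3 : T (m + 3) = T (m + 2) + (T (m + 3) - T (m + 2)) := by omega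
      have h4 : T (m + 4) = 3 ^ T (m + 2) * 3 ^ (T (m + 3) - T (m + 2)) := by
        show 3 ^ T (m + 3) = _
        rw [← pow_add, ← h3]
      rw [h4, Nat.mul_sub, mul_one, show T (m + 3) = 3 ^ T (m + 2) from rfl]
    -- 2-adic part
    have h2' : 2 ^ (m + 4) ∣ T (m + 4) - T (m + 3) := by
      obtain ⟨t, ht⟩ : 2 ^ (m + 2) ∣ T (m + 3) - T (m + 2) :=
        dvd_trans (pow_dvd_pow 2 (by omega)) h2
      have hdd : 2 ^ (m + 4) ∣ 3 ^ (T (m + 3) - T (m + 2)) - 1 := by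
        refine dvd_trans (two_pow_dvd (m + 1)) ?_
        rw [ht, pow_mul, show m + 1 + 1 = m + 2 from by omega]
        have := Nat.sub_dvd_pow_sub_pow (3 ^ 2 ^ (m + 2)) 1 t
        simpa using this
      rw [hfact]
      exact hdd.mul_left _
    -- 5-adic part
    obtain ⟨c, hc⟩ := five_pow (m + 1)
    set q : ℕ := 5 ^ (m + 1) with hq
    have hc' : 3 ^ (4 * 5 ^ (m + 1)) = 1 + 5 * q + 25 * q * c := by
      rw [hc, show (5:ℕ) ^ (m + 2) = 5 * q by rw [pow_succ]; ring,
        show (5:ℕ) ^ (m + 3) = 25 * q by rw [pow_succ, pow_succ]; ring]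
    obtain ⟨d, hd⟩ := pow_one_add q c n
    have hpow : 3 ^ (T (m + 3) - T (m + 2)) = 1 + 5*q*n + 25*q*d := by
      rw [heq, pow_mul, hc', hd]
    have hΔ : T (m + 4) - T (m + 3) = 5 ^ (m + 2) * (3 ^ T (m + 2) * (n + 5 * d)) := by
      rw [hfact, hpow, show (5:ℕ) ^ (m + 2) = 5 * q by rw [pow_succ]; ring]
      have : 1 + 5*q*n + 25*q*d - 1 = 5 * q * (n + 5 * d) := by ring_nf; omega
      rw [this]; ring
    set M : ℕ := 3 ^ T (m + 2) * (n + 5 * d) with hM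
    have h4M : (4 : ℕ) ∣ M := by
      have h4Δ : (4 : ℕ) ∣ 5 ^ (m + 2) * M := by
        rw [← hΔ]
        refine dvd_trans ⟨2 ^ (m + 2), ?_⟩ h2'
        rw [show m + 4 = 2 + (m + 2) from by omega, pow_add]
        norm_num
      have hcop : Nat.Coprime 4 (5 ^ (m + 2)) := Nat.Coprime.pow_right _ (by norm_num)
      exact hcop.dvd_of_dvd_mul_left h4Δ
    obtain ⟨n', hn'⟩ := h4M
    refine ⟨n', ?_, h2', ?_⟩
    · rw [hΔ, hn', show m + 1 + 1 = m + 2 from by omega]; ring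
    · -- n' % 5 = 3 ^ (m + 2) % 5
      have h3T : (3 : ℕ) ^ T (m + 2) ≡ 2 [MOD 5] := pow3_mod5 (T_mod4 (m + 1))
      have h4n' : 4 * n' ≡ 2 * n [MOD 5] := by
        calc 4 * n' = 3 ^ T (m + 2) * (n + 5 * d) := by rw [← hn']
        _ ≡ 2 * (n + 5 * d) [MOD 5] := Nat.ModEq.mul_right _ h3T
        _ ≡ 2 * n [MOD 5] := by unfold Nat.ModEq; omega
      have hmain : n' ≡ 3 ^ (m + 2) [MOD 5] := by
        calc n' ≡ 16 * n' [MOD 5] := by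
              have : (1 : ℕ) ≡ 16 [MOD 5] := by decide
              simpa using this.mul_right n'
        _ = 4 * (4 * n') := by ring
        _ ≡ 4 * (2 * n) [MOD 5] := h4n'.mul_left 4
        _ = 8 * n := by ring
        _ ≡ 3 * n [MOD 5] := Nat.ModEq.mul_right n (by decide)
        _ ≡ 3 * 3 ^ (m + 1) [MOD 5] := Nat.ModEq.mul_left 3 hn
        _ = 3 ^ (m + 2) := by rw [pow_succ]; ring
      exact hmain

theorem stmt15 : ∀ b : ℕ, 2 ≤ b →
    (T (b + 1) - T b) / 10 ^ (b - 1) % 10 = if Odd b then 4 else 6 := by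
  intro b hb
  obtain ⟨m, rfl⟩ : ∃ m, b = m + 2 := ⟨b - 2, by omega⟩
  obtain ⟨n, heq, h2, hn⟩ := main m
  rw [show m + 2 + 1 = m + 3 from by omega, show m + 2 - 1 = m + 1 from by omega]
  have hdvd5 : 5 ^ (m + 1) ∣ T (m + 3) - T (m + 2) := ⟨4 * n, by rw [heq]; ring⟩
  have hcop : Nat.Coprime (2 ^ (m + 3)) (5 ^ (m + 1)) :=
    Nat.Coprime.pow _ _ (by norm_num)
  obtain ⟨k, hk⟩ := hcop.mul_dvd_of_dvd_of_dvd h2 hdvd5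
  have hΔ : T (m + 3) - T (m + 2) = 10 ^ (m + 1) * (4 * k) := by
    rw [hk, show (10:ℕ) = 2 * 5 from rfl, mul_pow,
      show m + 3 = (m + 1) + 2 from by omega, pow_add]
    ring
  have hnk : n = 2 ^ (m + 1) * k := by
    have h45 : 4 * 5 ^ (m + 1) * n = 4 * 5 ^ (m + 1) * (2 ^ (m + 1) * k) := by
      rw [← heq, hΔ, show (10:ℕ) = 2 * 5 from rfl, mul_pow]; ring
    exact Nat.eq_of_mul_eq_mul_left (by positivity) h45
  have hk5 : k ≡ 4 ^ (m + 1) [MOD 5] := by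
    have hmod : 2 ^ (m + 1) * k ≡ 3 ^ (m + 1) [MOD 5] := by rw [← hnk]; exact hn
    have h6 : (6 : ℕ) ^ (m + 1) ≡ 1 [MOD 5] := by
      have := (show (6 : ℕ) ≡ 1 [MOD 5] by decide).pow (m + 1)
      simpa using this
    calc k = 1 * k := (one_mul k).symm
    _ ≡ 6 ^ (m + 1) * k [MOD 5] := h6.symm.mul_right k
    _ = 3 ^ (m + 1) * (2 ^ (m + 1) * k) := by
        rw [show (6:ℕ) = 3 * 2 from rfl, mul_pow]; ring
    _ ≡ 3 ^ (m + 1) * 3 ^ (m + 1) [MOD 5] := hmod.mul_left _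
    _ = 9 ^ (m + 1) := by rw [← mul_pow]; norm_num
    _ ≡ 4 ^ (m + 1) [MOD 5] := Nat.ModEq.pow _ (by decide)
  rw [hΔ, Nat.mul_div_cancel_left _ (by positivity)]
  have hk5' : k % 5 = 4 ^ (m + 1) % 5 := hk5
  have h4 := pow4_mod5 (m + 1)
  rcases Nat.even_or_odd m with hm | hm
  · have h1 : ¬ Odd (m + 2) := by
      rw [Nat.odd_iff]; rw [Nat.even_iff] at hm; omega
    rw [if_neg h1]
    have h2' : ¬ Even (m + 1) := by
      rw [Nat.even_iff] at hm ⊢; omega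
    rw [if_neg h2'] at h4
    omega
  · have h1 : Odd (m + 2) := by
      rw [Nat.odd_iff] at hm ⊢; omega
    rw [if_pos h1]
    have h2' : Even (m + 1) := by
      rw [Nat.odd_iff] at hm; rw [Nat.even_iff]; omega
    rw [if_pos h2'] at h4
    omega
end
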